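/- arXiv:1311.6996 — 3 statements merged into one kernel-verified Lean document; each statement's English description precedes it below -/
import Mathlib

section
/- G contains a clique of size k if and only if G′ contains a biclique (A, B) with A nonempty, |A| ≤ |B|, and |A|·|B| − |A| ≥ k³ − k² − k. -/
/-!
In a biclique `(A, B)` of `G′` the edge part of `B` consists of edges of `G` inside
`S = V \ A`, so `|B| ≤ e(G[S]) + k(k-1)/2`. A `k`-clique `C` yields the biclique
`(V \ C, E(C) ∪ W)`, for which `|A|·|B| − |A| = k³ − k² − k` exactly. Conversely, writing
`a = |A|`, `s = 2k − a` and `n` for the number of non-edges inside `S`, the bound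
`a(|B| − 1) ≥ k³ − k² − k` together with `|B| ≤ C(s,2) − n + C(k,2)` is a cubic inequality
that forces `n + k ≤ s`; deleting one endpoint of every non-edge of `S` then leaves a
`k`-clique.
-/

open Finset

/-- Number of elements of `W`, namely `k(k−1)/2`. -/
def Wcard (k : ℕ) : ℕ := k * (k - 1) / 2

/-- Adjacency in the bipartite graph `G′` whose parts are `V₁ = V` and
`V₂ = E ∪ W` (modelled inside `Sym2 V ⊕ Fin w`): a vertex `a ∈ V₁` is adjacent
to an edge `e ∈ E` iff `a` is not an endpoint of `e`, and `a` is adjacent to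
every element of `W`. -/
def GpAdj {V : Type*} (G : SimpleGraph V) (w : ℕ) (a : V) (b : Sym2 V ⊕ Fin w) : Prop :=
  match b with
  | Sum.inl e => a ∉ e
  | Sum.inr _ => True

/-- `(A, B)` is a biclique of `G′`: `A ⊆ V₁`, `B ⊆ V₂ = E ∪ W` (so the `Sym2`
elements of `B` must be genuine edges of `G`), and every element of `A` is
adjacent in `G′` to every element of `B`. -/
def IsBiclique {V : Type*} (G : SimpleGraph V) (w : ℕ)
    (A : Finset V) (B : Finset (Sym2 V ⊕ Fin w)) : Prop :=
  (∀ e : Sym2 V, Sum.inl e ∈ B → e ∈ G.edgeSet) ∧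
    ∀ a ∈ A, ∀ b ∈ B, GpAdj G w a b

namespace SimpleGraph

variable {V : Type*} [DecidableEq V] (G : SimpleGraph V)

/-- Deleting one endpoint of each pair in `M` leaves at least `#S - #M` pairwise adjacent
vertices of `S`. -/
theorem exists_isNClique_of_card_add_le {k : ℕ} (M : Finset (Sym2 V)) {S : Finset V}
    (hM : ∀ x ∈ S, ∀ y ∈ S, Gᶜ.Adj x y → s(x, y) ∈ M) (hcard : #M + k ≤ #S) :
    ∃ C ⊆ S, G.IsNClique k C := by
  induction M using Finset.induction_on generalizing S with
  | empty =>
    obtain ⟨C, hCS, hC⟩ := exists_subset_card_eq (show k ≤ #S by simpa using hcard)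
    refine ⟨C, hCS, ⟨fun x hx y hy hxy => ?_, hC⟩⟩
    by_contra hnadj
    exact notMem_empty _ (hM x (hCS hx) y (hCS hy) ⟨hxy, hnadj⟩)
  | insert e M he ih =>
    induction e using Sym2.ind with | _ x y => ?_
    have hM' : ∀ u ∈ S.erase x, ∀ v ∈ S.erase x, Gᶜ.Adj u v → s(u, v) ∈ M := by
      intro u hu v hv huv
      refine (mem_insert.1 (hM u (mem_of_mem_erase hu) v (mem_of_mem_erase hv) huv)).resolve_left
        fun h => ?_
      exact (Sym2.eq_iff.1 h).elim (ne_of_mem_erase hu ·.1) (ne_of_mem_erase hv ·.2)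
    have hcard' : #M + k ≤ #(S.erase x) := by
      have := pred_card_le_card_erase (a := x) (s := S)
      rw [card_insert_of_notMem he] at hcard
      omega
    obtain ⟨C, hCS, hC⟩ := ih hM' hcard'
    exact ⟨C, hCS.trans (erase_subset x S), hC⟩

variable [Fintype V]

theorem card_edgeFinset_top_inter_sym2 (S : Finset V) :
    #((⊤ : SimpleGraph V).edgeFinset ∩ S.sym2) = (#S).choose 2 := by
  rw [← filter_edgeFinset_toFinset_subset, card_filter_edgeFinset_toFinset_subset,
    ← Fintype.card_coe S, ← card_edgeFinset_top_eq_card_choose_two]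
  congr!
  exact induce_top _

variable [DecidableRel G.Adj]

theorem card_edgeFinset_inter_sym2_add_compl (S : Finset V) :
    #(G.edgeFinset ∩ S.sym2) + #(Gᶜ.edgeFinset ∩ S.sym2) = (#S).choose 2 := by
  rw [← card_union_of_disjoint, ← union_inter_distrib_right, ← card_edgeFinset_top_inter_sym2,
    ← edgeFinset_sup]
  · congr 2
    exact edgeFinset_inj.2 sup_compl_eq_top
  · exact (disjoint_edgeFinset.2 disjoint_compl_right).mono inter_subset_left inter_subset_left

variable {G} in
theorem IsClique.card_edgeFinset_inter_sym2 {C : Finset V} (hC : G.IsClique (C : Set V)) :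
    #(G.edgeFinset ∩ C.sym2) = (#C).choose 2 := by
  have hcompl : Gᶜ.edgeFinset ∩ C.sym2 = ∅ := by
    refine eq_empty_of_forall_notMem fun e he => ?_
    induction e using Sym2.ind with
    | _ x y =>
      obtain ⟨hxy, hC'⟩ := mem_inter.1 he
      rw [mem_edgeFinset, mem_edgeSet, compl_adj] at hxy
      rw [mk_mem_sym2_iff] at hC'
      exact hxy.2 (hC hC'.1 hC'.2 hxy.1)
  simpa [hcompl] using G.card_edgeFinset_inter_sym2_add_compl C

end SimpleGraph

open SimpleGraph

theorem isBiclique_iff_subset_disjSum {V : Type*} [Fintype V] [DecidableEq V]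
    (G : SimpleGraph V) [DecidableRel G.Adj] (w : ℕ) (A : Finset V)
    (B : Finset (Sym2 V ⊕ Fin w)) :
    IsBiclique G w A B ↔ B ⊆ (G.edgeFinset ∩ Aᶜ.sym2).disjSum univ := by
  constructor
  · rintro ⟨hE, hadj⟩ (e | i) hb
    · refine inl_mem_disjSum.2 (mem_inter.2 ⟨mem_edgeFinset.2 (hE e hb), ?_⟩)
      exact mem_sym2_iff.2 fun a hae => mem_compl.2 fun ha => hadj a ha _ hb hae
    · exact inr_mem_disjSum.2 (mem_univ i)
  · intro hB
    refine ⟨fun e he => mem_edgeFinset.1 (mem_inter.1 (inl_mem_disjSum.1 (hB he))).1, ?_⟩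
    rintro a ha (e | i) hb
    · exact fun hae =>
        mem_compl.1 (mem_sym2_iff.1 (mem_inter.1 (inl_mem_disjSum.1 (hB hb))).2 a hae) ha
    · trivial

theorem IsBiclique.card_add_card_compl_le {V : Type*} [Fintype V] [DecidableEq V]
    {G : SimpleGraph V} [DecidableRel G.Adj] {w : ℕ} {A : Finset V}
    {B : Finset (Sym2 V ⊕ Fin w)} (hAB : IsBiclique G w A B) :
    #B + #(Gᶜ.edgeFinset ∩ Aᶜ.sym2) ≤ (#Aᶜ).choose 2 + w := by
  have hsub := card_le_card ((isBiclique_iff_subset_disjSum G w A B).1 hAB)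
  rw [card_disjSum, card_univ, Fintype.card_fin] at hsub
  have := G.card_edgeFinset_inter_sym2_add_compl Aᶜ
  omega

theorem wcard_eq_choose_two (k : ℕ) : Wcard k = k.choose 2 :=
  (Nat.choose_two_right k).symm

theorem Nat.two_mul_choose_two_add_self (m : ℕ) : 2 * m.choose 2 + m = m * m := by
  induction m with
  | zero => rfl
  | succ m ih =>
    rw [Nat.choose_succ_succ, Nat.choose_one_right]
    linarith

theorem Int.add_le_of_cubic_add_le_mul {k a s b n : ℤ} (ha : 1 ≤ a) (hs : 0 ≤ s)
    (has : a + s = 2 * k) (hn : 0 ≤ n) (hbn : 2 * (b + n) + s + k ≤ s * s + k * k)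
    (hab : k ^ 3 + a ≤ a * b + k ^ 2 + k) : n + k ≤ s := by
  obtain rfl : s = 2 * k - a := by linarith
  -- For `a ≤ k` the contradiction needs `n > s - k`; for `a > k` already `n ≥ 0` suffices.
  have hb := mul_le_mul_of_nonneg_left hbn (by linarith : 0 ≤ a)
  by_contra! h
  rcases le_or_gt a k with hak | hak
  · have ht : 0 ≤ k - a := by linarith
    have htt : 0 ≤ (k - a) * (k - a - 1) := by nlinarith [Int.le_self_sq (k - a)]
    nlinarith [mul_le_mul_of_nonneg_left (show k - a + 1 ≤ n by linarith) (by linarith : 0 ≤ a),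
      mul_nonneg (mul_nonneg (sub_nonneg.2 ha) ht) ht, mul_nonneg (sub_nonneg.2 ha) ht,
      mul_nonneg htt (by linarith : 0 ≤ 2 * (k - a) + 1)]
  · nlinarith [mul_le_mul_of_nonneg_left hn (by linarith : 0 ≤ a),
      mul_nonneg (mul_nonneg hs (sub_nonneg.2 hak.le)) (by linarith : 0 ≤ a - k + 1)]

theorem Nat.add_le_of_cubic_le_mul_sub {k a s b n : ℕ} (hk : 2 ≤ k) (ha : 0 < a)
    (has : a + s = 2 * k) (hbn : b + n ≤ s.choose 2 + k.choose 2)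
    (hab : k ^ 3 - k ^ 2 - k ≤ a * b - a) : n + k ≤ s := by
  have hs := Nat.two_mul_choose_two_add_self s
  have hk' := Nat.two_mul_choose_two_add_self k
  have hcube : k ^ 2 + k < k ^ 3 := by nlinarith
  have hbn' : 2 * (b + n) + s + k ≤ s * s + k * k := by omega
  have hab' : k ^ 3 + a ≤ a * b + k ^ 2 + k := by omega
  exact_mod_cast Int.add_le_of_cubic_add_le_mul (k := k) (a := a) (s := s) (b := b) (n := n)
    (by exact_mod_cast ha) (by positivity) (by exact_mod_cast has)
    (by positivity) (by exact_mod_cast hbn') (by exact_mod_cast hab')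

theorem statement3_general {V : Type*} [Fintype V] (k : ℕ) (hk : 5 ≤ k)
    (hV : Fintype.card V = 2 * k) (G : SimpleGraph V) :
    (∃ C : Finset V, G.IsNClique k C) ↔
      ∃ (A : Finset V) (B : Finset (Sym2 V ⊕ Fin (Wcard k))),
        A.Nonempty ∧ A.card ≤ B.card ∧ IsBiclique G (Wcard k) A B ∧
          k ^ 3 - k ^ 2 - k ≤ A.card * B.card - A.card := by
  classical
  constructor
  · rintro ⟨C, hC, hCk⟩
    have hk2 := Nat.two_mul_choose_two_add_self k
    set B := (G.edgeFinset ∩ C.sym2).disjSum (univ : Finset (Fin (Wcard k)))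
    have hA : #Cᶜ = k := by rw [card_compl, hV, hCk]; omega
    have hB : #B = 2 * k.choose 2 := by
      rw [card_disjSum, hC.card_edgeFinset_inter_sym2, card_univ, Fintype.card_fin, hCk,
        wcard_eq_choose_two, two_mul]
    have hcube : k * #B + k ^ 2 = k ^ 3 := by rw [hB]; nlinarith
    refine ⟨Cᶜ, B, card_pos.1 (by omega), ?_, (isBiclique_iff_subset_disjSum G _ _ _).2 ?_, ?_⟩
    · rw [hA, hB]; nlinarith
    · rw [compl_compl]
    · rw [hA]; omega
  · rintro ⟨A, B, hA, -, hAB, hK⟩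
    have hAS : #A + #Aᶜ = 2 * k := by
      have := card_le_univ A
      rw [card_compl, hV]; omega
    have hB : #B + #(Gᶜ.edgeFinset ∩ Aᶜ.sym2) ≤ (#Aᶜ).choose 2 + k.choose 2 :=
      hAB.card_add_card_compl_le.trans_eq (by rw [wcard_eq_choose_two])
    obtain ⟨C, -, hC⟩ := G.exists_isNClique_of_card_add_le _
      (fun x hx y hy hxy =>
        mem_inter.2 ⟨mem_edgeFinset.2 ((mem_edgeSet Gᶜ).2 hxy), mk_mem_sym2_iff.2 ⟨hx, hy⟩⟩)
      (Nat.add_le_of_cubic_le_mul_sub (by omega) hA.card_pos hAS hB hK)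
    exact ⟨C, hC⟩

/-- With `|V| = 2k`, `k ≥ 5`, and `|W| = k(k−1)/2`: `G` contains a
clique of size `k` if and only if `G′` contains a biclique `(A, B)` with `A`
nonempty, `|A| ≤ |B|`, and `|A|·|B| − |A| ≥ k³ − k² − k`. -/
theorem statement3 {V : Type*} [Fintype V] [DecidableEq V] (k : ℕ) (hk : 5 ≤ k)
    (hV : Fintype.card V = 2 * k) (G : SimpleGraph V) :
    (∃ C : Finset V, G.IsNClique k C) ↔
      ∃ (A : Finset V) (B : Finset (Sym2 V ⊕ Fin (Wcard k))),
        A.Nonempty ∧ A.card ≤ B.card ∧ IsBiclique G (Wcard k) A B ∧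
          k ^ 3 - k ^ 2 - k ≤ A.card * B.card - A.card :=
  statement3_general k hk hV G
end

section
/- Diminishing returns for module addition: let C ⊆ C′ be configurations over (V, E) and let m ⊆ V be a nonempty set such that both C ∪ {m} and C′ ∪ {m} are configurations. Then |R(C)| − |R(C ∪ {m})| ≥ |R(C′)| − |R(C′ ∪ {m})|; that is, if adding m to C removes e representative edges, adding m to the larger configuration C′ removes at most e representative edges. -/
/-- A configuration over `(V, E)`: a family of nonempty subsets of `V` that
contains every singleton and is laminar (any two members are nested or
disjoint). -/
def IsConfig {V : Type*} [Fintype V] [DecidableEq V] (M : Finset (Finset V)) : Prop :=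
  (∀ m ∈ M, m.Nonempty) ∧ (∀ v : V, {v} ∈ M) ∧
    ∀ m ∈ M, ∀ n ∈ M, m ⊆ n ∨ n ⊆ m ∨ m ∩ n = ∅

/-- `p = (m, n)` is a possible edge of the configuration `M`:
`m, n ∈ M`, `m × n ⊆ E`, and `m = n` or `m ∩ n = ∅`. -/
def PossEdge {V : Type*} [DecidableEq V] (E : Set (V × V)) (M : Finset (Finset V))
    (p : Finset V × Finset V) : Prop :=
  p.1 ∈ M ∧ p.2 ∈ M ∧ (∀ u ∈ p.1, ∀ v ∈ p.2, (u, v) ∈ E) ∧ (p.1 = p.2 ∨ p.1 ∩ p.2 = ∅)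

/-- The possible edge `p` is dominated by some other possible edge `q`,
i.e. `q ≠ p`, `p.1 ⊆ q.1` and `p.2 ⊆ q.2`. -/
def Dominated {V : Type*} [DecidableEq V] (E : Set (V × V)) (M : Finset (Finset V))
    (p : Finset V × Finset V) : Prop :=
  ∃ q : Finset V × Finset V, PossEdge E M q ∧ q ≠ p ∧ p.1 ⊆ q.1 ∧ p.2 ⊆ q.2

/-- The set `R(M)` of representative edges of the configuration `M`: the
possible edges not dominated by any other possible edge. -/
def RepEdges {V : Type*} [DecidableEq V] (E : Set (V × V)) (M : Finset (Finset V)) :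
    Set (Finset V × Finset V) :=
  {p | PossEdge E M p ∧ ¬ Dominated E M p}

/-- A configuration `C` is optimal if it minimises the number of representative
edges among all configurations, and no proper subfamily of `C` that is itself a
configuration has the same number of representative edges. -/
def IsOptimal {V : Type*} [Fintype V] [DecidableEq V] (E : Set (V × V))
    (C : Finset (Finset V)) : Prop :=
  IsConfig C ∧ (∀ C' : Finset (Finset V), IsConfig C' → (RepEdges E C).ncard ≤ (RepEdges E C').ncard) ∧
    ∀ D ⊆ C, D ≠ C → IsConfig D → (RepEdges E D).ncard ≠ (RepEdges E C).ncard


/-!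
Write `f X = |R(X)|`. Adding a module `w` to a configuration `X` creates representative edges,
all of which use `w`, and destroys others. Each created edge `e` dominates a destroyed one,
obtained by shrinking the components of `e` equal to `w` to maximal members of `X` inside `w`;
this gives an injection from created to destroyed edges, so `f (X ∪ {w}) ≤ f X` and
`f X - f (X ∪ {w})` is the number of destroyed minus the number of created edges.

By induction on `C' \ C` it suffices to add one module `a` at a time, i.e. to show
`f (C ∪ {a}) - f (C ∪ {a, m}) ≤ f C - f (C ∪ {m})`. This is symmetric in `a` and `m`, so by
laminarity we may assume that `m` does not lie inside `a`. We then inject the edges destroyed by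
adding `m` to `C ∪ {a}`, together with the edges created by adding `m` to `C`, into the edges
destroyed by adding `m` to `C`, together with those created by adding `m` to `C ∪ {a}`.
A destroyed edge of `C ∪ {a}` is sent to itself, or, if it uses `a`, to the edge of `C` that it
destroyed when `a` was added. A created edge `e` of `C ∪ {m}` is either lifted, by enlarging its
component other than `m` as far as possible in `C ∪ {a}`, to a created edge of `C ∪ {a, m}`, or
sent to the edge it destroys. It is always lifted when the edge it destroys is already the image
of an edge of the first kind; choosing maximal members of `C` by one fixed well-order of all sets
ensures that no two such edges have the same lift.
-/

open Finset

section PossibleEdges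

variable {V : Type*} [DecidableEq V] {E : Set (V × V)} {M N : Finset (Finset V)}
  {p q : Finset V × Finset V} {w : Finset V}

theorem PossEdge.mono (hMN : M ⊆ N) (hp : PossEdge E M p) : PossEdge E N p :=
  ⟨hMN hp.1, hMN hp.2.1, hp.2.2⟩

theorem PossEdge.of_insert (hp : PossEdge E (insert w M) p) (h1 : p.1 ≠ w) (h2 : p.2 ≠ w) :
    PossEdge E M p :=
  ⟨(mem_insert.1 hp.1).resolve_left h1, (mem_insert.1 hp.2.1).resolve_left h2, hp.2.2⟩

theorem PossEdge.inter_eq_empty (hp : PossEdge E M p) (hne : p.1 ≠ p.2) : p.1 ∩ p.2 = ∅ :=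
  hp.2.2.2.resolve_left hne

theorem PossEdge.fst_eq_snd_of_mem (hp : PossEdge E M p) {u : V} (h1 : u ∈ p.1)
    (h2 : u ∈ p.2) : p.1 = p.2 :=
  hp.2.2.2.resolve_right fun h => notMem_empty u (h ▸ mem_inter.2 ⟨h1, h2⟩)

theorem PossEdge.of_le (hq : PossEdge E N q) (hpq : p ≤ q) (h1 : p.1 ∈ M) (h2 : p.2 ∈ M)
    (hp : p.1 = p.2 ∨ q.1 ≠ q.2) : PossEdge E M p :=
  ⟨h1, h2, fun u hu v hv => hq.2.2.1 u (hpq.1 hu) v (hpq.2 hv),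
    hp.imp_right fun hne =>
      subset_empty.1 <| hq.inter_eq_empty hne ▸ inter_subset_inter hpq.1 hpq.2⟩

theorem PossEdge.swap (hp : PossEdge E M p) : PossEdge (Prod.swap ⁻¹' E) M p.swap :=
  ⟨hp.2.1, hp.1, fun u hu v hv => hp.2.2.1 v hv u hu,
    hp.2.2.2.imp Eq.symm fun h => by rwa [inter_comm] at h⟩

theorem mem_repEdges_iff_maximal : p ∈ RepEdges E M ↔ Maximal (PossEdge E M) p := by
  simp only [RepEdges, Dominated, Set.mem_ofPred_eq, maximal_iff_forall_gt,
    lt_iff_le_and_ne, Prod.le_def]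
  aesop

theorem eq_of_mem_repEdges (hp : p ∈ RepEdges E M) (hq : PossEdge E M q) (hpq : p ≤ q) :
    p = q :=
  (mem_repEdges_iff_maximal.1 hp).eq_of_le hq hpq

theorem notMem_repEdges_of_lt (hq : PossEdge E M q) (hpq : p < q) : p ∉ RepEdges E M :=
  fun hp => (mem_repEdges_iff_maximal.1 hp).not_gt hq hpq

theorem exists_lt_of_notMem_repEdges (hp : PossEdge E M p) (h : p ∉ RepEdges E M) :
    ∃ q, PossEdge E M q ∧ p < q := by
  simp only [mem_repEdges_iff_maximal, maximal_iff_forall_gt, hp, true_and, not_forall,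
    not_not] at h
  obtain ⟨q, hpq, hq⟩ := h
  exact ⟨q, hq, hpq⟩

theorem mem_repEdges_of_mem_repEdges_insert (hp : p ∈ RepEdges E (insert w M))
    (h : PossEdge E M p) : p ∈ RepEdges E M :=
  mem_repEdges_iff_maximal.2 <|
    (mem_repEdges_iff_maximal.1 hp).mono (fun _ hq => hq.mono (subset_insert w M)) h

theorem swap_mem_repEdges_iff : p.swap ∈ RepEdges (Prod.swap ⁻¹' E) M ↔ p ∈ RepEdges E M := by
  have key : ∀ {E : Set (V × V)} {p}, p ∈ RepEdges E M → p.swap ∈ RepEdges (Prod.swap ⁻¹' E) M :=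
    fun hp => mem_repEdges_iff_maximal.2 ⟨hp.1.swap, fun q hq hpq => by
      rw [← Prod.swap_le_swap, Prod.swap_swap]
      exact (mem_repEdges_iff_maximal.1 hp).2 hq.swap (Prod.swap_le_swap.2 hpq)⟩
  exact ⟨key, key⟩

end PossibleEdges

section Configurations

variable {V : Type*} [Fintype V] [DecidableEq V] {M N : Finset (Finset V)} {x y : Finset V}

theorem IsConfig.nonempty (hM : IsConfig M) (hx : x ∈ M) : x.Nonempty := hM.1 x hx

theorem IsConfig.subset_or_subset (hM : IsConfig M) (hx : x ∈ M) (hy : y ∈ M) {u : V}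
    (hux : u ∈ x) (huy : u ∈ y) : x ⊆ y ∨ y ⊆ x := by
  rcases hM.2.2 x hx y hy with h | h | h
  · exact .inl h
  · exact .inr h
  · exact absurd (mem_inter.2 ⟨hux, huy⟩) (h ▸ notMem_empty u)

theorem IsConfig.of_subset (hM : IsConfig M) (hNM : N ⊆ M) (hN : ∀ v, {v} ∈ N) : IsConfig N :=
  ⟨fun x hx => hM.1 x (hNM hx), hN, fun x hx y hy => hM.2.2 x (hNM hx) y (hNM hy)⟩

theorem IsConfig.inter_ne_empty_of_subset (hM : IsConfig M) (hx : x ∈ M) {s t : Finset V}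
    (hs : x ⊆ s) (ht : x ⊆ t) : s ∩ t ≠ ∅ := fun h =>
  (hM.nonempty hx).ne_empty (subset_empty.1 (h ▸ subset_inter hs ht))

theorem IsConfig.exists_mem_maximal (hM : IsConfig M) {w : Finset V} {u : V} (hu : u ∈ w) :
    ∃ A, u ∈ A ∧ Maximal (fun B => B ∈ M ∧ B ⊆ w) A := by
  obtain ⟨A, huA, hA⟩ := Set.Finite.exists_le_maximal (s := {B | B ∈ M ∧ B ⊆ w})
    (Set.toFinite _) ⟨hM.2.1 u, singleton_subset_iff.2 hu⟩
  exact ⟨A, singleton_subset_iff.1 huA, hA⟩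

end Configurations

section GainedLost

variable {V : Type*} [DecidableEq V] (E : Set (V × V)) (M : Finset (Finset V)) (w : Finset V)

def gainedEdges : Set (Finset V × Finset V) := RepEdges E (insert w M) \ RepEdges E M

def lostEdges : Set (Finset V × Finset V) := RepEdges E M \ RepEdges E (insert w M)

variable {E M w} {N : Finset (Finset V)} {e p g : Finset V × Finset V}

theorem swap_mem_gainedEdges_iff :
    e.swap ∈ gainedEdges (Prod.swap ⁻¹' E) M w ↔ e ∈ gainedEdges E M w := by
  simp only [gainedEdges, Set.mem_sdiff, swap_mem_repEdges_iff]

theorem swap_mem_lostEdges_iff :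
    p.swap ∈ lostEdges (Prod.swap ⁻¹' E) M w ↔ p ∈ lostEdges E M w := by
  simp only [lostEdges, Set.mem_sdiff, swap_mem_repEdges_iff]

theorem ncard_repEdges_sub_ncard_repEdges_insert [Finite V] :
    ((RepEdges E M).ncard : ℤ) - (RepEdges E (insert w M)).ncard =
      (lostEdges E M w).ncard - (gainedEdges E M w).ncard := by
  have h1 := Set.ncard_inter_add_ncard_sdiff_eq_ncard (RepEdges E M) (RepEdges E (insert w M))
  have h2 := Set.ncard_inter_add_ncard_sdiff_eq_ncard (RepEdges E (insert w M)) (RepEdges E M)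
  rw [Set.inter_comm] at h2
  simp only [lostEdges, gainedEdges]
  omega

theorem fst_eq_or_snd_eq_of_mem_gainedEdges (he : e ∈ gainedEdges E M w) :
    e.1 = w ∨ e.2 = w := by
  by_contra h
  push Not at h
  exact he.2 (mem_repEdges_of_mem_repEdges_insert he.1 (he.1.1.of_insert h.1 h.2))

theorem gainedEdges_of_snd_ne (he : e ∈ gainedEdges E M w) (h2 : e.2 ≠ w) :
    e.1 = w ∧ e.2 ∈ M ∧ e.2 ∩ w = ∅ := by
  have h1 := (fst_eq_or_snd_eq_of_mem_gainedEdges he).resolve_right h2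
  refine ⟨h1, (mem_insert.1 he.1.1.2.1).resolve_left h2, ?_⟩
  rw [inter_comm, ← h1]
  exact he.1.1.inter_eq_empty fun h => h2 (h ▸ h1)

theorem mem_gainedEdges_of_mem_repEdges_insert (hw : w ∉ M)
    (hp : p ∈ RepEdges E (insert w M)) (ht : p.1 = w ∨ p.2 = w) : p ∈ gainedEdges E M w :=
  ⟨hp, fun h => ht.elim (fun h1 => hw (h1 ▸ h.1.1)) fun h2 => hw (h2 ▸ h.1.2.1)⟩

theorem exists_gt_of_mem_lostEdges (hp : p ∈ lostEdges E M w) :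
    ∃ g, PossEdge E (insert w M) g ∧ p < g ∧ (g.1 = w ∨ g.2 = w) := by
  obtain ⟨g, hg, hpg⟩ := exists_lt_of_notMem_repEdges (hp.1.1.mono (subset_insert w M)) hp.2
  refine ⟨g, hg, hpg, ?_⟩
  by_contra h
  push Not at h
  exact notMem_repEdges_of_lt (hg.of_insert h.1 h.2) hpg hp.1

theorem mem_lostEdges_of_le (hw : w ∉ M) (hp : p ∈ RepEdges E M) (hg : PossEdge E N g)
    (hpg : p ≤ g) (hgw : g.1 = w ∨ g.2 = w) : p ∈ lostEdges E M w := by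
  set q : Finset V × Finset V := (if g.1 = w then w else p.1, if g.2 = w then w else p.2)
  have hqg : q ≤ g := by
    constructor <;> dsimp only [q] <;> split_ifs with h
    exacts [h.symm.subset, hpg.1, h.symm.subset, hpg.2]
  have hpq : p ≤ q := by
    constructor <;> dsimp only [q] <;> split_ifs with h
    exacts [h ▸ hpg.1, subset_rfl, h ▸ hpg.2, subset_rfl]
  have hq : PossEdge E (insert w M) q := by
    refine hg.of_le hqg ?_ ?_ ?_
    · dsimp only [q]; split_ifs
      exacts [mem_insert_self w M, mem_insert_of_mem hp.1.1]
    · dsimp only [q]; split_ifs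
      exacts [mem_insert_self w M, mem_insert_of_mem hp.1.2.1]
    · by_cases h12 : g.1 = g.2
      · have h : g.1 = w ∧ g.2 = w := by rcases hgw with h | h <;> simp [← h, h12]
        simp [q, h]
      · exact .inr h12
  have hpq' : p ≠ q := by
    intro h
    rcases hgw with hg1 | hg2
    · have h1 : p.1 = w := by simpa [q, hg1] using congrArg Prod.fst h
      exact hw (h1 ▸ hp.1.1)
    · have h2 : p.2 = w := by simpa [q, hg2] using congrArg Prod.snd h
      exact hw (h2 ▸ hp.1.2.1)
  exact ⟨hp, notMem_repEdges_of_lt hq (lt_of_le_of_ne hpq hpq')⟩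

theorem fst_eq_or_snd_eq_of_lt {C : Finset (Finset V)} {a : Finset V}
    (he : e ∈ RepEdges E (insert w C)) (hg : PossEdge E (insert w (insert a C)) g)
    (heg : e < g) : g.1 = a ∨ g.2 = a := by
  by_contra h
  push Not at h
  have hmem : ∀ {x}, x ∈ insert w (insert a C) → x ≠ a → x ∈ insert w C := fun hx hxa =>
    mem_insert.2 ((mem_insert.1 hx).imp_right fun hx => (mem_insert.1 hx).resolve_left hxa)
  exact notMem_repEdges_of_lt ⟨hmem hg.1 h.1, hmem hg.2.1 h.2, hg.2.2⟩ heg he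

end GainedLost

section WellMin

variable {α : Type*} [Inhabited α] {S T : Set α} {x : α}

open Classical in
/-- A choice from `S` by one fixed well-order of `α`, so that choices from different sets are
compatible (`wellMin_eq_wellMin`). -/
noncomputable def wellMin (S : Set α) : α :=
  if h : S.Nonempty then (IsWellFounded.wf (r := WellOrderingRel)).min S h else default

theorem wellMin_mem (h : S.Nonempty) : wellMin S ∈ S := by
  rw [wellMin, dif_pos h]
  exact WellFounded.min_mem _ S h

theorem not_lt_wellMin (hx : x ∈ S) : ¬WellOrderingRel x (wellMin S) := by
  rw [wellMin, dif_pos ⟨x, hx⟩]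
  exact WellFounded.not_lt_min _ S hx

theorem wellMin_eq_wellMin (hST : wellMin S ∈ T) (hTS : wellMin T ∈ S) :
    wellMin S = wellMin T := by
  rcases trichotomous_of WellOrderingRel (wellMin S) (wellMin T) with h | h | h
  exacts [absurd h (not_lt_wellMin hST), h, absurd h (not_lt_wellMin hTS)]

end WellMin

section KilledEdge

variable {V : Type*} [DecidableEq V] (E : Set (V × V)) (M : Finset (Finset V))
  (w n : Finset V)

/-- When `(w, n)` is a new representative edge of `insert w M`, each `A` in this set gives a
representative edge `(A, n)` of `M` dominated by `(w, n)` (`goodPiece_spec`). -/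
def goodPieces : Set (Finset V) :=
  {A | Maximal (fun B => B ∈ M ∧ B ⊆ w) A ∧ ∀ b ∈ M, n < b → ¬PossEdge E M (A, b)}

noncomputable def goodPiece : Finset V := wellMin (goodPieces E M w n)

open Classical in
/-- The edge of `M` destroyed by a new representative edge `e` of `insert w M` that we assign
to `e`: a component of `e` equal to `w` is shrunk to a good piece of `w`; if both are, any
destroyed edge below `(w, w)` is taken. -/
noncomputable def killedEdge (e : Finset V × Finset V) : Finset V × Finset V :=
  if e.2 ≠ w then (goodPiece E M w e.2, e.2)
  else if e.1 ≠ w then (e.1, goodPiece (Prod.swap ⁻¹' E) M w e.1)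
  else if h : ∃ p ∈ lostEdges E M w, p ≤ (w, w) then h.choose else e

variable {E M w n} {e : Finset V × Finset V}

theorem killedEdge_of_snd_ne (h2 : e.2 ≠ w) :
    killedEdge E M w e = (goodPiece E M w e.2, e.2) :=
  if_pos h2

theorem killedEdge_of_snd_eq (h1 : e.1 ≠ w) (h2 : e.2 = w) :
    killedEdge E M w e = (e.1, goodPiece (Prod.swap ⁻¹' E) M w e.1) := by
  simp [killedEdge, h1, h2]

theorem killedEdge_swap (h : e.1 = w ∨ e.2 = w) (hd : e.1 ≠ w ∨ e.2 ≠ w) :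
    killedEdge (Prod.swap ⁻¹' E) M w e.swap = (killedEdge E M w e).swap := by
  rcases hd with h1 | h2
  · rw [killedEdge_of_snd_eq h1 (h.resolve_left h1), killedEdge_of_snd_ne (e := e.swap) h1]
    rfl
  · rw [killedEdge_of_snd_ne h2, killedEdge_of_snd_eq (e := e.swap) h2 (h.resolve_right h2)]
    rfl

variable [Fintype V]

theorem goodPieces_nonempty (hM : IsConfig M) (hMw : IsConfig (insert w M)) (hw : w ∉ M)
    (hn : n ∈ M) (he : (w, n) ∈ RepEdges E (insert w M)) : (goodPieces E M w n).Nonempty := by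
  have hwn : w ∩ n = ∅ := he.1.inter_eq_empty fun h : w = n => hw (h ▸ hn)
  obtain ⟨v, hv⟩ := hM.nonempty hn
  by_contra hG
  have hA : ∀ A, Maximal (fun B => B ∈ M ∧ B ⊆ w) A → ∃ b ∈ M, n < b ∧ PossEdge E M (A, b) := by
    intro A hA
    by_contra h
    push Not at h
    exact hG ⟨A, hA, h⟩
  set W : Set (Finset V) :=
    {b | b ∈ M ∧ n < b ∧ ∃ A, Maximal (fun B => B ∈ M ∧ B ⊆ w) A ∧ PossEdge E M (A, b)}
  have hW : ∀ {u}, u ∈ w → ∃ A b, u ∈ A ∧ A ⊆ w ∧ b ∈ W ∧ PossEdge E M (A, b) := by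
    intro u hu
    obtain ⟨A, huA, hAmax⟩ := hM.exists_mem_maximal hu
    obtain ⟨b, hb, hnb, hAb⟩ := hA A hAmax
    exact ⟨A, b, huA, hAmax.1.2, ⟨hb, hnb, A, hAmax, hAb⟩, hAb⟩
  obtain ⟨u, hu⟩ := hMw.nonempty (mem_insert_self w M)
  obtain ⟨-, b, -, -, hbW, -⟩ := hW hu
  -- the members of `W` all contain `n`, so they form a chain with a least element `b₀`
  obtain ⟨b₀, hb₀⟩ := Set.Finite.exists_minimal (s := W) (Set.toFinite _) ⟨b, hbW⟩
  have hb₀le : ∀ b ∈ W, b₀ ⊆ b := fun b hb =>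
    (hM.subset_or_subset hb₀.1.1 hb.1 (hb₀.1.2.1.le hv) (hb.2.1.le hv)).elim id (hb₀.2 hb)
  have hq : PossEdge E (insert w M) (w, b₀) := by
    refine ⟨mem_insert_self w M, mem_insert_of_mem hb₀.1.1, fun u hu v hv => ?_, .inr ?_⟩
    · obtain ⟨A, b, huA, -, hbW, hAb⟩ := hW hu
      exact hAb.2.2.1 u huA v (hb₀le b hbW hv)
    · refine eq_empty_iff_forall_notMem.2 fun u hu => ?_
      obtain ⟨A, b, huA, hAw, hbW, hAb⟩ := hW (mem_inter.1 hu).1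
      have hAb' : A = b := hAb.fst_eq_snd_of_mem huA (hb₀le b hbW (mem_inter.1 hu).2)
      have : v ∈ w ∩ n := mem_inter.2 ⟨hAw (hAb' ▸ hbW.2.1.le hv), hv⟩
      simp [hwn] at this
  have := eq_of_mem_repEdges he hq ⟨subset_rfl, hb₀.1.2.1.le⟩
  exact hb₀.1.2.1.ne (congrArg Prod.snd this)

theorem goodPiece_spec (hM : IsConfig M) (hMw : IsConfig (insert w M)) (hw : w ∉ M)
    (hn : n ∈ M) (he : (w, n) ∈ RepEdges E (insert w M)) :
    goodPiece E M w n ∈ goodPieces E M w n ∧ (goodPiece E M w n, n) ∈ lostEdges E M w := by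
  have hA : goodPiece E M w n ∈ goodPieces E M w n :=
    wellMin_mem (goodPieces_nonempty hM hMw hw hn he)
  refine ⟨hA, ?_⟩
  set A := goodPiece E M w n
  obtain ⟨⟨⟨hAM, hAw⟩, hAmax⟩, hAgood⟩ := hA
  have hAn : (A, n) ≤ (w, n) := ⟨hAw, subset_rfl⟩
  have hposs : PossEdge E M (A, n) := he.1.of_le hAn hAM hn (.inr fun h : w = n => hw (h ▸ hn))
  refine ⟨mem_repEdges_iff_maximal.2 ⟨hposs, fun q hq hAq => ?_⟩, notMem_repEdges_of_lt he.1
    (lt_of_le_of_ne hAn fun h => hw ((show A = w from congrArg Prod.fst h) ▸ hAM))⟩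
  obtain ⟨u, hu⟩ := hM.nonempty hAM
  rcases hMw.subset_or_subset (mem_insert_of_mem hq.1) (mem_insert_self w M) (hAq.1 hu) (hAw hu)
    with h | h
  · have hq1 : q.1 = A := le_antisymm (hAmax ⟨hq.1, h⟩ hAq.1) hAq.1
    rcases (hAq.2 : n ⊆ q.2).eq_or_ssubset with h2 | h2
    · exact le_of_eq (Prod.ext hq1 h2.symm)
    · exact absurd (by rw [← hq1]; exact hq) (hAgood q.2 hq.2.1 h2)
  · have := eq_of_mem_repEdges he (hq.mono (subset_insert w M)) ⟨h, hAq.2⟩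
    exact (hw ((show w = q.1 from congrArg Prod.fst this) ▸ hq.1)).elim

theorem goodPiece_spec_of_snd_ne (hM : IsConfig M) (hMw : IsConfig (insert w M)) (hw : w ∉ M)
    (he : e ∈ gainedEdges E M w) (h2 : e.2 ≠ w) :
    goodPiece E M w e.2 ∈ goodPieces E M w e.2 ∧ (goodPiece E M w e.2, e.2) ∈ lostEdges E M w := by
  obtain ⟨h1, hn, -⟩ := gainedEdges_of_snd_ne he h2
  exact goodPiece_spec hM hMw hw hn (h1 ▸ he.1)

theorem exists_mem_lostEdges_le (hM : IsConfig M) (hMw : IsConfig (insert w M)) (hw : w ∉ M)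
    (he : (w, w) ∈ RepEdges E (insert w M)) : ∃ p ∈ lostEdges E M w, p ≤ (w, w) := by
  obtain ⟨u, hu⟩ := hMw.nonempty (mem_insert_self w M)
  have hu' : ({u}, {u}) ≤ (w, w) := ⟨singleton_subset_iff.2 hu, singleton_subset_iff.2 hu⟩
  obtain ⟨p, -, hp⟩ := Set.Finite.exists_le_maximal (s := {p | PossEdge E M p ∧ p ≤ (w, w)})
    (Set.toFinite _) ⟨he.1.of_le hu' (hM.2.1 u) (hM.2.1 u) (.inl rfl), hu'⟩
  have hpw : p < (w, w) :=
    lt_of_le_of_ne hp.1.2 fun h => hw ((show p.1 = w from congrArg Prod.fst h) ▸ hp.1.1.1)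
  refine ⟨p, ⟨mem_repEdges_iff_maximal.2 ⟨hp.1.1, fun q hq hpq => ?_⟩,
    notMem_repEdges_of_lt he.1 hpw⟩, hp.1.2⟩
  by_cases hqw : q ≤ (w, w)
  · exact hp.2 ⟨hq, hqw⟩ hpq
  exfalso
  obtain ⟨v, hv⟩ := hM.nonempty hp.1.1.1
  obtain ⟨v', hv'⟩ := hM.nonempty hp.1.1.2.1
  have hwq : w ⊆ q.1 ∨ w ⊆ q.2 := by
    by_contra h
    push Not at h
    exact hqw ⟨(hMw.subset_or_subset (mem_insert_of_mem hq.1) (mem_insert_self w M) (hpq.1 hv)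
      (hp.1.2.1 hv)).resolve_right h.1, (hMw.subset_or_subset (mem_insert_of_mem hq.2.1)
      (mem_insert_self w M) (hpq.2 hv') (hp.1.2.2 hv')).resolve_right h.2⟩
  -- `q.1` and `q.2` meet inside `w`, so `q` is a diagonal edge above `(w, w)`
  have h12 : q.1 = q.2 := by
    rcases hwq with h | h
    · exact hq.fst_eq_snd_of_mem (h (hp.1.2.2 hv')) (hpq.2 hv')
    · exact hq.fst_eq_snd_of_mem (hpq.1 hv) (h (hp.1.2.1 hv))
  have := eq_of_mem_repEdges he (hq.mono (subset_insert w M))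
    (hwq.elim (fun h => ⟨h, h12 ▸ h⟩) fun h => ⟨h12 ▸ h, h⟩)
  exact hw ((show w = q.1 from congrArg Prod.fst this) ▸ hq.1)

theorem gainedEdges_snd_not_subset (hM : IsConfig M) (he : e ∈ gainedEdges E M w)
    (h2 : e.2 ≠ w) : ¬e.2 ⊆ w := fun h => by
  obtain ⟨-, hn, hnw⟩ := gainedEdges_of_snd_ne he h2
  exact (hM.nonempty hn).ne_empty (by rw [← inter_eq_left.2 h, hnw])

theorem killedEdge_spec_of_snd_ne (hM : IsConfig M) (hMw : IsConfig (insert w M)) (hw : w ∉ M)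
    (he : e ∈ gainedEdges E M w) (h2 : e.2 ≠ w) :
    killedEdge E M w e ∈ lostEdges E M w ∧ killedEdge E M w e ≤ e ∧
      e.1 = (if (killedEdge E M w e).1 ⊆ w then w else (killedEdge E M w e).1) ∧
      e.2 = (if (killedEdge E M w e).2 ⊆ w then w else (killedEdge E M w e).2) := by
  have h1 := (gainedEdges_of_snd_ne he h2).1
  obtain ⟨hgood, hmem⟩ := goodPiece_spec_of_snd_ne hM hMw hw he h2
  rw [killedEdge_of_snd_ne h2]
  exact ⟨hmem, ⟨h1 ▸ hgood.1.1.2, subset_rfl⟩, by simp [hgood.1.1.2, h1],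
    by simp [gainedEdges_snd_not_subset hM he h2]⟩

theorem killedEdge_spec (hM : IsConfig M) (hMw : IsConfig (insert w M)) (hw : w ∉ M)
    (he : e ∈ gainedEdges E M w) :
    killedEdge E M w e ∈ lostEdges E M w ∧ killedEdge E M w e ≤ e ∧
      e.1 = (if (killedEdge E M w e).1 ⊆ w then w else (killedEdge E M w e).1) ∧
      e.2 = (if (killedEdge E M w e).2 ⊆ w then w else (killedEdge E M w e).2) := by
  by_cases h2 : e.2 = w
  · by_cases h1 : e.1 = w
    · obtain rfl : e = (w, w) := Prod.ext h1 h2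
      have hex := exists_mem_lostEdges_le hM hMw hw he.1
      simp only [killedEdge, ne_eq, not_true_eq_false, if_false, dif_pos hex]
      obtain ⟨hmem, hle⟩ := hex.choose_spec
      exact ⟨hmem, hle, by simp [hle.1], by simp [hle.2]⟩
    · obtain ⟨hmem, hle, hfst, hsnd⟩ :=
        killedEdge_spec_of_snd_ne hM hMw hw (swap_mem_gainedEdges_iff.2 he) (e := e.swap) h1
      rw [killedEdge_swap (.inr h2) (.inl h1)] at hmem hle hfst hsnd
      exact ⟨swap_mem_lostEdges_iff.1 hmem, Prod.swap_le_swap.1 hle, hsnd, hfst⟩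
  · exact killedEdge_spec_of_snd_ne hM hMw hw he h2

theorem killedEdge_injOn (hM : IsConfig M) (hMw : IsConfig (insert w M)) (hw : w ∉ M) :
    Set.InjOn (killedEdge E M w) (gainedEdges E M w) := fun e he e' he' h => by
  obtain ⟨-, -, h1, h2⟩ := killedEdge_spec hM hMw hw he
  obtain ⟨-, -, h1', h2'⟩ := killedEdge_spec hM hMw hw he'
  rw [h] at h1 h2
  exact Prod.ext (h1.trans h1'.symm) (h2.trans h2'.symm)

theorem ncard_repEdges_insert_le (hM : IsConfig M) (hMw : IsConfig (insert w M)) :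
    (RepEdges E (insert w M)).ncard ≤ (RepEdges E M).ncard := by
  by_cases hw : w ∈ M
  · rw [insert_eq_of_mem hw]
  have h := Set.ncard_le_ncard_of_injOn (killedEdge E M w)
    (fun e he => (killedEdge_spec hM hMw hw he).1) (killedEdge_injOn hM hMw hw)
  have := ncard_repEdges_sub_ncard_repEdges_insert (E := E) (M := M) (w := w)
  omega

end KilledEdge

section Lift

variable {V : Type*} [DecidableEq V] (E : Set (V × V)) (C Y : Finset (Finset V))
  (a m : Finset V)

open Classical in
noncomputable def raise (n : Finset V) : Finset V :=
  if h : ∃ b, IsGreatest {b | n ⊆ b ∧ b ≠ m ∧ PossEdge E (insert m Y) (m, b)} b then h.choose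
  else n

noncomputable def lift (e : Finset V × Finset V) : Finset V × Finset V :=
  (if e.1 = m then m else raise (Prod.swap ⁻¹' E) Y m e.1, if e.2 = m then m else raise E Y m e.2)

/-- The edge that `e` destroys when `m` is added to `C` is also the image under `project` of an
edge destroyed when `m` is added to `insert a C`; such an `e` must be sent by `lift`. -/
def SharedKill (e : Finset V × Finset V) : Prop :=
  ∃ p ∈ lostEdges E (insert a C) m, (p.1 = a ∨ p.2 = a) ∧ killedEdge E C a p = killedEdge E C m e

noncomputable def project (p : Finset V × Finset V) : Finset V × Finset V :=
  if p.1 = a ∨ p.2 = a then killedEdge E C a p else p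

/-- The new edges of `insert m C` that are sent by `lift`; the others are sent to the edge they
destroy. -/
def liftedEdges : Set (Finset V × Finset V) :=
  {e ∈ gainedEdges E C m | lift E (insert a C) m e ∈ RepEdges E (insert m (insert a C)) ∧
    (SharedKill E C a m e ∨ ∀ e' ∈ gainedEdges E C m,
      lift E (insert a C) m e' = lift E (insert a C) m e → e' = e)}

variable {E C Y m} {n : Finset V} {e : Finset V × Finset V}

theorem lift_swap : lift (Prod.swap ⁻¹' E) Y m e.swap = (lift E Y m e).swap := rfl

theorem lift_diag : lift E Y m (m, m) = (m, m) := by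
  simp [lift]

theorem lift_of_snd_ne (he : e ∈ gainedEdges E C m) (h2 : e.2 ≠ m) :
    lift E Y m e = (m, raise E Y m e.2) := by
  simp [lift, (gainedEdges_of_snd_ne he h2).1, h2]

theorem isGreatest_raise [Fintype V] (hY : IsConfig Y) (hn : n ≠ m)
    (hmn : PossEdge E (insert m Y) (m, n)) :
    IsGreatest {b | n ⊆ b ∧ b ≠ m ∧ PossEdge E (insert m Y) (m, b)} (raise E Y m n) := by
  have hY' : ∀ {b}, b ≠ m → PossEdge E (insert m Y) (m, b) → b ∈ Y :=
    fun hb hmb => (mem_insert.1 hmb.2.1).resolve_left hb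
  obtain ⟨v, hv⟩ := hY.nonempty (hY' hn hmn)
  have hex : ∃ b, IsGreatest {b | n ⊆ b ∧ b ≠ m ∧ PossEdge E (insert m Y) (m, b)} b := by
    obtain ⟨b, hb⟩ := Set.Finite.exists_maximal
      (s := {b | n ⊆ b ∧ b ≠ m ∧ PossEdge E (insert m Y) (m, b)}) (Set.toFinite _)
      ⟨n, subset_rfl, hn, hmn⟩
    refine ⟨b, hb.1, fun b' hb' => ?_⟩
    rcases hY.subset_or_subset (hY' hb'.2.1 hb'.2.2) (hY' hb.1.2.1 hb.1.2.2) (hb'.1 hv)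
      (hb.1.1 hv) with h | h
    exacts [h, hb.2 hb' h]
  rw [raise, dif_pos hex]
  exact hex.choose_spec

end Lift

section Step

variable {V : Type*} [Fintype V] [DecidableEq V]

structure ModulePair (C : Finset (Finset V)) (a m : Finset V) : Prop where
  config : IsConfig C
  config_insert_insert : IsConfig (insert m (insert a C))
  a_notMem : a ∉ C
  m_notMem : m ∉ C
  ne : a ≠ m
  inter_eq_empty_or_subset : a ∩ m = ∅ ∨ a ⊆ m

namespace ModulePair

variable {E : Set (V × V)} {C : Finset (Finset V)} {a m : Finset V}
  {e e' p q : Finset V × Finset V}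

theorem config_insert_a (hs : ModulePair C a m) : IsConfig (insert a C) :=
  hs.config_insert_insert.of_subset (subset_insert _ _) fun v => mem_insert_of_mem (hs.config.2.1 v)

theorem config_insert_m (hs : ModulePair C a m) : IsConfig (insert m C) :=
  hs.config_insert_insert.of_subset (insert_subset_insert m (subset_insert a C))
    fun v => mem_insert_of_mem (hs.config.2.1 v)

theorem m_notMem_insert (hs : ModulePair C a m) : m ∉ insert a C := by
  rw [mem_insert]
  rintro (h | h)
  exacts [hs.ne h.symm, hs.m_notMem h]

theorem m_not_subset_a (hs : ModulePair C a m) : ¬m ⊆ a := fun h => by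
  rcases hs.inter_eq_empty_or_subset with h' | h'
  · obtain ⟨u, hu⟩ := hs.config_insert_insert.nonempty (mem_insert_self m _)
    exact notMem_empty u (h' ▸ mem_inter.2 ⟨h hu, hu⟩)
  · exact hs.ne (subset_antisymm h' h)

theorem isGreatest_raise_snd (hs : ModulePair C a m) (he : e ∈ gainedEdges E C m)
    (h2 : e.2 ≠ m) :
    IsGreatest {b | e.2 ⊆ b ∧ b ≠ m ∧ PossEdge E (insert m (insert a C)) (m, b)}
      (raise E (insert a C) m e.2) := by
  have he1 : (m, e.2) = e := Prod.ext (gainedEdges_of_snd_ne he h2).1.symm rfl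
  refine isGreatest_raise hs.config_insert_a h2 ?_
  rw [he1]
  exact he.1.1.mono (insert_subset_insert m (subset_insert a C))

theorem raise_snd_not_subset (hs : ModulePair C a m) (he : e ∈ gainedEdges E C m)
    (h2 : e.2 ≠ m) : ¬raise E (insert a C) m e.2 ⊆ m := fun h =>
  gainedEdges_snd_not_subset hs.config he h2 ((hs.isGreatest_raise_snd he h2).1.1.trans h)

theorem possEdge_lift (hs : ModulePair C a m) (he : e ∈ gainedEdges E C m) (h2 : e.2 ≠ m) :
    PossEdge E (insert m (insert a C)) (lift E (insert a C) m e) := by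
  rw [lift_of_snd_ne he h2]
  exact (hs.isGreatest_raise_snd he h2).1.2.2

theorem fst_mem_and_snd_eq_of_lift_lt (hs : ModulePair C a m) (he : e ∈ gainedEdges E C m)
    (h2 : e.2 ≠ m) (hq : PossEdge E (insert m (insert a C)) q)
    (hlq : lift E (insert a C) m e < q) : q.1 ∈ C ∧ m ⊆ q.1 ∧ q.2 = a := by
  rw [lift_of_snd_ne he h2] at hlq
  set r := raise E (insert a C) m e.2
  have hr := hs.isGreatest_raise_snd he h2
  obtain ⟨hmq, hrq⟩ : m ⊆ q.1 ∧ r ⊆ q.2 := hlq.le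
  have hq2 : q.2 ≠ m := fun h => hs.raise_snd_not_subset he h2 (hrq.trans h.le)
  have hq1m : q.1 ≠ m := by
    intro h
    have hq' : PossEdge E (insert m (insert a C)) (m, q.2) := by
      rwa [show q = (m, q.2) from Prod.ext h rfl] at hq
    exact hlq.ne (Prod.ext h.symm (subset_antisymm hrq (hr.2 ⟨hr.1.1.trans hrq, hq2, hq'⟩)))
  have hq1a : q.1 ≠ a := fun h => hs.m_not_subset_a (hmq.trans h.le)
  have heq : e < q := lt_of_le_of_lt ⟨(gainedEdges_of_snd_ne he h2).1.le, hr.1.1⟩ hlq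
  exact ⟨(mem_insert.1 ((mem_insert.1 hq.1).resolve_left hq1m)).resolve_left hq1a, hmq,
    (fst_eq_or_snd_eq_of_lt he.1 hq heq).resolve_left hq1a⟩

theorem raise_eq_a_of_lift_eq (hs : ModulePair C a m) (he : e ∈ gainedEdges E C m)
    (he' : e' ∈ gainedEdges E C m) (hne : e' ≠ e)
    (hl : lift E (insert a C) m e' = lift E (insert a C) m e) (h2 : e.2 ≠ m) :
    raise E (insert a C) m e.2 = a ∧ a ∩ m = ∅ ∧ e'.2 ≠ m := by
  have h2' : e'.2 ≠ m := by
    intro h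
    have hl2 := congrArg Prod.snd hl
    simp [lift, h, h2] at hl2
    exact hs.raise_snd_not_subset he h2 hl2.symm.le
  have hl2 : raise E (insert a C) m e'.2 = raise E (insert a C) m e.2 := by
    simpa [lift_of_snd_ne he h2, lift_of_snd_ne he' h2'] using hl
  have hr := hs.isGreatest_raise_snd he h2
  suffices hra : raise E (insert a C) m e.2 = a by
    refine ⟨hra, ?_, h2'⟩
    rw [inter_comm, ← hra]
    exact hr.1.2.2.inter_eq_empty hr.1.2.1.symm
  by_contra hra
  have hr' := hs.isGreatest_raise_snd he' h2'
  rw [hl2] at hr'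
  have hposs : PossEdge E (insert m C) (m, raise E (insert a C) m e.2) :=
    hr.1.2.2.of_le le_rfl (mem_insert_self m C) (mem_insert_of_mem ((mem_insert.1
      ((mem_insert.1 hr.1.2.2.2.1).resolve_left hr.1.2.1)).resolve_left hra)) (.inr hr.1.2.1.symm)
  -- otherwise `(m, raise e.2)` is a possible edge of `insert m C` dominating both `e` and `e'`
  have h := eq_of_mem_repEdges he.1 hposs ⟨(gainedEdges_of_snd_ne he h2).1.le, hr.1.1⟩
  have h' := eq_of_mem_repEdges he'.1 hposs ⟨(gainedEdges_of_snd_ne he' h2').1.le, hr'.1.1⟩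
  exact hne (h'.trans h.symm)

theorem diag_mem_repEdges (hs : ModulePair C a m) (he : (m, m) ∈ gainedEdges E C m) :
    (m, m) ∈ RepEdges E (insert m (insert a C)) := by
  refine mem_repEdges_iff_maximal.2 (maximal_iff_forall_gt.2
    ⟨he.1.1.mono (insert_subset_insert m (subset_insert a C)), fun q hlt hq => ?_⟩)
  rcases fst_eq_or_snd_eq_of_lt he.1 hq hlt with h | h
  exacts [hs.m_not_subset_a (h ▸ hlt.le.1), hs.m_not_subset_a (h ▸ hlt.le.2)]

theorem eq_diag_of_lift_eq (hs : ModulePair C a m) (he : e ∈ gainedEdges E C m)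
    (hl : lift E (insert a C) m e = (m, m)) : e = (m, m) := by
  have key : ∀ {E : Set (V × V)} {e}, e ∈ gainedEdges E C m →
      lift E (insert a C) m e = (m, m) → e.2 = m := fun he hl => by
    by_contra h2
    rw [lift_of_snd_ne he h2] at hl
    exact hs.raise_snd_not_subset he h2 (Prod.mk.inj hl).2.le
  exact Prod.ext (key (swap_mem_gainedEdges_iff.2 he) (by rw [lift_swap, hl]; rfl)) (key he hl)

theorem killedEdge_notMem_repEdges_of_snd_ne (hs : ModulePair C a m)
    (he : e ∈ gainedEdges E C m) (h2 : e.2 ≠ m)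
    (hyp : lift E (insert a C) m e ∉ RepEdges E (insert m (insert a C)) ∨
      ∃ e' ∈ gainedEdges E C m, e' ≠ e ∧ lift E (insert a C) m e' = lift E (insert a C) m e) :
    killedEdge E C m e ∉ RepEdges E (insert a C) := by
  obtain ⟨⟨⟨⟨hαC, hαm⟩, -⟩, -⟩, -⟩ :=
    goodPiece_spec_of_snd_ne hs.config hs.config_insert_m hs.m_notMem he h2
  rw [killedEdge_of_snd_ne h2]
  set α := goodPiece E C m e.2
  have hr := hs.isGreatest_raise_snd he h2
  obtain ⟨q, hq, hαq, hq2⟩ : ∃ q, PossEdge E (insert a C) q ∧ (α, e.2) ≤ q ∧ q.2 = a := by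
    rcases hyp with hyp | ⟨e', he', hne, hl⟩
    · obtain ⟨q, hq, hlq⟩ := exists_lt_of_notMem_repEdges (hs.possEdge_lift he h2) hyp
      obtain ⟨hq1C, hmq1, hq2a⟩ := hs.fst_mem_and_snd_eq_of_lift_lt he h2 hq hlq
      rw [lift_of_snd_ne he h2] at hlq
      refine ⟨q, hq.of_le le_rfl (mem_insert_of_mem hq1C) (hq2a ▸ mem_insert_self a C)
        (.inr fun h => hs.a_notMem (by rw [← hq2a, ← h]; exact hq1C)),
        ⟨hαm.trans hmq1, hr.1.1.trans hlq.le.2⟩, hq2a⟩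
    · have hra := (hs.raise_eq_a_of_lift_eq he he' hne hl h2).1
      exact ⟨(α, a), hr.1.2.2.of_le ⟨hαm, hra.ge⟩ (mem_insert_of_mem hαC) (mem_insert_self a C)
        (.inr hr.1.2.1.symm), ⟨subset_rfl, hra ▸ hr.1.1⟩, rfl⟩
  refine notMem_repEdges_of_lt hq (lt_of_le_of_ne hαq fun h => hs.a_notMem ?_)
  rw [← hq2, ← congrArg Prod.snd h]
  exact (gainedEdges_of_snd_ne he h2).2.1

theorem sharedKill_witness (hs : ModulePair C a m) (hdisj : a ∩ m = ∅)
    (he : e ∈ gainedEdges E C m) (h2 : e.2 ≠ m) (hp : p ∈ lostEdges E (insert a C) m)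
    (ht : p.1 = a ∨ p.2 = a) (hpe : killedEdge E C a p = killedEdge E C m e) :
    p = (goodPiece E C m e.2, a) ∧ Maximal (fun B => B ∈ C ∧ B ⊆ a) e.2 := by
  have hpG := mem_gainedEdges_of_mem_repEdges_insert hs.a_notMem hp.1 ht
  obtain ⟨-, -, hp1, -⟩ := killedEdge_spec hs.config hs.config_insert_a hs.a_notMem hpG
  obtain ⟨⟨⟨⟨hαC, hαm⟩, -⟩, -⟩, -⟩ :=
    goodPiece_spec_of_snd_ne hs.config hs.config_insert_m hs.m_notMem he h2
  rw [killedEdge_of_snd_ne h2] at hpe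
  have hαa : ¬goodPiece E C m e.2 ⊆ a := fun h =>
    hs.config.inter_ne_empty_of_subset hαC h hαm hdisj
  rw [hpe] at hp1
  simp only [hαa, if_false] at hp1
  have hp1a : p.1 ≠ a := fun h => hs.a_notMem (h ▸ hp1 ▸ hαC)
  have hp2 : p.2 = a := ht.resolve_left hp1a
  have hpR := (goodPiece_spec_of_snd_ne hs.config hs.config_insert_a hs.a_notMem
    (swap_mem_gainedEdges_iff.2 hpG) (e := p.swap) hp1a).1.1
  rw [killedEdge_of_snd_eq hp1a hp2] at hpe
  refine ⟨Prod.ext hp1 hp2, ?_⟩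
  rw [show e.2 = goodPiece (Prod.swap ⁻¹' E) C a p.1 from (congrArg Prod.snd hpe).symm]
  exact hpR

theorem mem_goodPieces_of_mem_repEdges (hs : ModulePair C a m) {β n : Finset V}
    (hβ : Maximal (fun B => B ∈ C ∧ B ⊆ m) β) (hβa : (β, a) ∈ RepEdges E (insert a C))
    (hn : Maximal (fun B => B ∈ C ∧ B ⊆ a) n) : β ∈ goodPieces E C m n := by
  refine ⟨hβ, fun b hb hnb hβb => ?_⟩
  obtain ⟨v, hv⟩ := hs.config.nonempty hn.1.1
  rcases hs.config_insert_a.subset_or_subset (mem_insert_of_mem hb) (mem_insert_self a C)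
    (hnb.le hv) (hn.1.2 hv) with h | h
  · exact hnb.not_ge (hn.2 ⟨hb, h⟩ hnb.le)
  · have hlt : (β, a) < (β, b) := lt_of_le_of_ne ⟨subset_rfl, h⟩ fun h' => hs.a_notMem <| by
      rw [show a = b from congrArg Prod.snd h']
      exact hb
    exact notMem_repEdges_of_lt (hβb.mono (subset_insert a C)) hlt hβa

theorem eq_of_sharedKill_of_snd_ne (hs : ModulePair C a m) (hdisj : a ∩ m = ∅)
    (he : e ∈ gainedEdges E C m) (he' : e' ∈ gainedEdges E C m) (h2 : e.2 ≠ m) (h2' : e'.2 ≠ m)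
    (hsh : SharedKill E C a m e) (hsh' : SharedKill E C a m e') : e = e' := by
  obtain ⟨p, hp, ht, hpe⟩ := hsh
  obtain ⟨p', hp', ht', hpe'⟩ := hsh'
  obtain ⟨rfl, hn⟩ := hs.sharedKill_witness hdisj he h2 hp ht hpe
  obtain ⟨rfl, hn'⟩ := hs.sharedKill_witness hdisj he' h2' hp' ht' hpe'
  have hgood := (goodPiece_spec_of_snd_ne hs.config hs.config_insert_m hs.m_notMem he h2).1
  have hgood' := (goodPiece_spec_of_snd_ne hs.config hs.config_insert_m hs.m_notMem he' h2').1
  -- both pieces are good for both `e.2` and `e'.2`, so the consistent choice agrees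
  have hαα : goodPiece E C m e.2 = goodPiece E C m e'.2 :=
    wellMin_eq_wellMin (hs.mem_goodPieces_of_mem_repEdges hgood.1 hp.1 hn')
      (hs.mem_goodPieces_of_mem_repEdges hgood'.1 hp'.1 hn)
  apply killedEdge_injOn hs.config hs.config_insert_m hs.m_notMem he he'
  rw [← hpe, ← hpe', hαα]

theorem sharedKill_swap (hs : ModulePair C a m) (hdisj : a ∩ m = ∅)
    (he : e ∈ gainedEdges E C m) (hd : e.1 ≠ m ∨ e.2 ≠ m) (hsh : SharedKill E C a m e) :
    SharedKill (Prod.swap ⁻¹' E) C a m e.swap := by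
  obtain ⟨p, hp, ht, hpe⟩ := hsh
  have hpd : p.1 ≠ a ∨ p.2 ≠ a := by
    by_contra hpd
    push Not at hpd
    obtain ⟨-, hple, -⟩ := killedEdge_spec hs.config hs.config_insert_a hs.a_notMem
      (mem_gainedEdges_of_mem_repEdges_insert hs.a_notMem hp.1 ht)
    obtain ⟨hmem, hele, -⟩ := killedEdge_spec hs.config hs.config_insert_m hs.m_notMem he
    rw [hpe] at hple
    rcases fst_eq_or_snd_eq_of_mem_gainedEdges he with h | h
    · exact hs.config.inter_ne_empty_of_subset hmem.1.1.1 (hple.1.trans hpd.1.le)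
        (hele.1.trans h.le) hdisj
    · exact hs.config.inter_ne_empty_of_subset hmem.1.1.2.1 (hple.2.trans hpd.2.le)
        (hele.2.trans h.le) hdisj
  refine ⟨p.swap, swap_mem_lostEdges_iff.2 hp, ht.symm, ?_⟩
  rw [killedEdge_swap ht hpd, killedEdge_swap (fst_eq_or_snd_eq_of_mem_gainedEdges he) hd, hpe]

theorem lift_mem_repEdges_of_snd_ne (hs : ModulePair C a m) (he : e ∈ gainedEdges E C m)
    (h2 : e.2 ≠ m) (hsh : a ∩ m = ∅ → SharedKill E C a m e) :
    lift E (insert a C) m e ∈ RepEdges E (insert m (insert a C)) := by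
  by_contra hnot
  obtain ⟨q, hq, hlq⟩ := exists_lt_of_notMem_repEdges (hs.possEdge_lift he h2) hnot
  obtain ⟨hq1C, hmq1, hq2a⟩ := hs.fst_mem_and_snd_eq_of_lift_lt he h2 hq hlq
  have hq12 : q.1 ≠ q.2 := fun h => hs.a_notMem (by rw [← hq2a, ← h]; exact hq1C)
  have hdisj : a ∩ m = ∅ := by
    rw [inter_comm, ← subset_empty, ← hq.inter_eq_empty hq12, hq2a]
    exact inter_subset_inter_right hmq1
  obtain ⟨p, hp, ht, hpe⟩ := hsh hdisj
  obtain ⟨rfl, -⟩ := hs.sharedKill_witness hdisj he h2 hp ht hpe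
  obtain ⟨⟨⟨⟨-, hαm⟩, -⟩, -⟩, -⟩ :=
    goodPiece_spec_of_snd_ne hs.config hs.config_insert_m hs.m_notMem he h2
  have hlt : (goodPiece E C m e.2, a) < q := lt_of_le_of_ne ⟨hαm.trans hmq1, hq2a.ge⟩ fun h =>
    hs.m_notMem (by rw [subset_antisymm hmq1 ((congrArg Prod.fst h).symm ▸ hαm)]; exact hq1C)
  exact notMem_repEdges_of_lt (hq.of_le le_rfl (mem_insert_of_mem hq1C)
    (hq2a ▸ mem_insert_self a C) (.inr hq12)) hlt hp.1

theorem lift_mem_repEdges (hs : ModulePair C a m) (he : e ∈ gainedEdges E C m)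
    (hsh : SharedKill E C a m e) :
    lift E (insert a C) m e ∈ RepEdges E (insert m (insert a C)) := by
  by_cases h2 : e.2 = m
  · by_cases h1 : e.1 = m
    · obtain rfl : e = (m, m) := Prod.ext h1 h2
      rw [lift_diag]
      exact hs.diag_mem_repEdges he
    · have h := hs.lift_mem_repEdges_of_snd_ne (swap_mem_gainedEdges_iff.2 he) (e := e.swap) h1
        fun hdisj => hs.sharedKill_swap hdisj he (.inl h1) hsh
      rw [lift_swap] at h
      exact swap_mem_repEdges_iff.1 h
  · exact hs.lift_mem_repEdges_of_snd_ne he h2 fun _ => hsh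

theorem eq_of_sharedKill (hs : ModulePair C a m) (he : e ∈ gainedEdges E C m)
    (he' : e' ∈ gainedEdges E C m) (hl : lift E (insert a C) m e' = lift E (insert a C) m e)
    (hsh : SharedKill E C a m e) (hsh' : SharedKill E C a m e') : e' = e := by
  by_contra hne
  by_cases h2 : e.2 = m
  · by_cases h1 : e.1 = m
    · obtain rfl : e = (m, m) := Prod.ext h1 h2
      exact hne (hs.eq_diag_of_lift_eq he' (hl.trans lift_diag))
    · have hsw := swap_mem_gainedEdges_iff.2 he
      have hsw' := swap_mem_gainedEdges_iff.2 he'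
      have hne' : e'.swap ≠ e.swap := fun h => hne (Prod.swap_injective h)
      have hl' : lift (Prod.swap ⁻¹' E) (insert a C) m e'.swap =
          lift (Prod.swap ⁻¹' E) (insert a C) m e.swap := by
        rw [lift_swap, lift_swap, hl]
      obtain ⟨-, hdisj, h1'⟩ := hs.raise_eq_a_of_lift_eq hsw hsw' hne' hl' h1
      exact hne' (hs.eq_of_sharedKill_of_snd_ne hdisj hsw' hsw h1' h1
        (hs.sharedKill_swap hdisj he' (.inl h1') hsh') (hs.sharedKill_swap hdisj he (.inl h1) hsh))
  · obtain ⟨-, hdisj, h2'⟩ := hs.raise_eq_a_of_lift_eq he he' hne hl h2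
    exact hne (hs.eq_of_sharedKill_of_snd_ne hdisj he' he h2' h2 hsh' hsh)

theorem killedEdge_notMem_repEdges (hs : ModulePair C a m) (he : e ∈ gainedEdges E C m)
    (hyp : lift E (insert a C) m e ∉ RepEdges E (insert m (insert a C)) ∨
      ∃ e' ∈ gainedEdges E C m, e' ≠ e ∧ lift E (insert a C) m e' = lift E (insert a C) m e) :
    killedEdge E C m e ∉ RepEdges E (insert a C) := by
  by_cases h2 : e.2 = m
  · by_cases h1 : e.1 = m
    · obtain rfl : e = (m, m) := Prod.ext h1 h2
      rcases hyp with hyp | ⟨e', he', hne, hl⟩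
      · rw [lift_diag] at hyp
        exact absurd (hs.diag_mem_repEdges he) hyp
      · exact absurd (hs.eq_diag_of_lift_eq he' (hl.trans lift_diag)) hne
    · have hyp' : lift (Prod.swap ⁻¹' E) (insert a C) m e.swap ∉
            RepEdges (Prod.swap ⁻¹' E) (insert m (insert a C)) ∨
          ∃ e' ∈ gainedEdges (Prod.swap ⁻¹' E) C m, e' ≠ e.swap ∧
            lift (Prod.swap ⁻¹' E) (insert a C) m e' =
              lift (Prod.swap ⁻¹' E) (insert a C) m e.swap := by
        rw [lift_swap, swap_mem_repEdges_iff]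
        refine hyp.imp_right fun ⟨e', he', hne, hl⟩ => ⟨e'.swap, swap_mem_gainedEdges_iff.2 he',
          fun h => hne (Prod.swap_injective h), by rw [lift_swap, hl]⟩
      have h := hs.killedEdge_notMem_repEdges_of_snd_ne (swap_mem_gainedEdges_iff.2 he)
        (e := e.swap) h1 hyp'
      rwa [killedEdge_swap (fst_eq_or_snd_eq_of_mem_gainedEdges he) (.inl h1),
        swap_mem_repEdges_iff] at h
  · exact hs.killedEdge_notMem_repEdges_of_snd_ne he h2 hyp

theorem project_mem (hs : ModulePair C a m) (hp : p ∈ lostEdges E (insert a C) m) :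
    project E C a p ∈ lostEdges E C m := by
  obtain ⟨g, hg, hpg, hgm⟩ := exists_gt_of_mem_lostEdges hp
  unfold project
  split_ifs with ht
  · obtain ⟨hmem, hle, -⟩ := killedEdge_spec hs.config hs.config_insert_a hs.a_notMem
      (mem_gainedEdges_of_mem_repEdges_insert hs.a_notMem hp.1 ht)
    exact mem_lostEdges_of_le hs.m_notMem hmem.1 hg (hle.trans hpg.le) hgm
  · push Not at ht
    exact mem_lostEdges_of_le hs.m_notMem
      (mem_repEdges_of_mem_repEdges_insert hp.1 (hp.1.1.of_insert ht.1 ht.2)) hg hpg.le hgm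

theorem fst_eq_or_snd_eq_iff_project_notMem (hs : ModulePair C a m)
    (hp : p ∈ lostEdges E (insert a C) m) :
    (p.1 = a ∨ p.2 = a) ↔ project E C a p ∉ RepEdges E (insert a C) := by
  unfold project
  split_ifs with ht
  · exact iff_of_true ht (killedEdge_spec hs.config hs.config_insert_a hs.a_notMem
      (mem_gainedEdges_of_mem_repEdges_insert hs.a_notMem hp.1 ht)).1.2
  · exact iff_of_false ht (not_not.2 hp.1)

theorem project_injOn (hs : ModulePair C a m) :
    Set.InjOn (project E C a) (lostEdges E (insert a C) m) := by
  intro p hp p' hp' h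
  have ht := (hs.fst_eq_or_snd_eq_iff_project_notMem hp).trans
    (h ▸ (hs.fst_eq_or_snd_eq_iff_project_notMem hp').symm)
  by_cases hpa : p.1 = a ∨ p.2 = a
  · have hpa' := ht.1 hpa
    rw [project, project, if_pos hpa, if_pos hpa'] at h
    exact killedEdge_injOn hs.config hs.config_insert_a hs.a_notMem
      (mem_gainedEdges_of_mem_repEdges_insert hs.a_notMem hp.1 hpa)
      (mem_gainedEdges_of_mem_repEdges_insert hs.a_notMem hp'.1 hpa') h
  · have hpa' := mt ht.2 hpa
    simpa [project, hpa, hpa'] using h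

theorem ncard_liftedEdges_le (hs : ModulePair C a m) :
    (liftedEdges E C a m).ncard ≤ (gainedEdges E (insert a C) m).ncard := by
  refine Set.ncard_le_ncard_of_injOn (lift E (insert a C) m) (fun e he => ⟨he.2.1, fun h => ?_⟩)
    (fun e he e' he' hl => ?_)
  · rcases fst_eq_or_snd_eq_of_mem_gainedEdges he.1 with h1 | h2
    · exact hs.m_notMem_insert (by simpa [lift, h1] using h.1.1)
    · exact hs.m_notMem_insert (by simpa [lift, h2] using h.1.2.1)
  · rcases he.2.2 with hsh | huniq
    · rcases he'.2.2 with hsh' | huniq'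
      · exact hs.eq_of_sharedKill he'.1 he.1 hl hsh' hsh
      · exact huniq' e he.1 hl
    · exact (huniq e' he'.1 hl.symm).symm

theorem disjoint_project_image_killedEdge_image (hs : ModulePair C a m) :
    Disjoint (project E C a '' lostEdges E (insert a C) m)
      (killedEdge E C m '' (gainedEdges E C m \ liftedEdges E C a m)) := by
  refine Set.disjoint_left.2 ?_
  rintro _ ⟨p, hp, rfl⟩ ⟨e, he, hpe⟩
  by_cases ht : p.1 = a ∨ p.2 = a
  · rw [project, if_pos ht] at hpe
    exact he.2 ⟨he.1, hs.lift_mem_repEdges he.1 ⟨p, hp, ht, hpe.symm⟩, .inl ⟨p, hp, ht, hpe.symm⟩⟩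
  · rw [project, if_neg ht] at hpe
    refine hs.killedEdge_notMem_repEdges he.1 ?_ (hpe ▸ hp.1)
    by_contra h
    push Not at h
    exact he.2 ⟨he.1, h.1, .inr fun e' he' hl => by_contra fun hne => h.2 e' he' hne hl⟩

theorem ncard_lostEdges_add_ncard_gainedEdges_le (hs : ModulePair C a m) :
    (lostEdges E (insert a C) m).ncard + (gainedEdges E C m).ncard ≤
      (lostEdges E C m).ncard + (gainedEdges E (insert a C) m).ncard := by
  have hL : (project E C a '' lostEdges E (insert a C) m ∪
      killedEdge E C m '' (gainedEdges E C m \ liftedEdges E C a m)).ncard ≤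
        (lostEdges E C m).ncard :=
    Set.ncard_le_ncard (Set.union_subset
      (Set.image_subset_iff.2 fun p hp => hs.project_mem hp)
      (Set.image_subset_iff.2 fun e (he : e ∈ gainedEdges E C m \ liftedEdges E C a m) =>
        (killedEdge_spec hs.config hs.config_insert_m hs.m_notMem he.1).1))
  rw [Set.ncard_union_eq hs.disjoint_project_image_killedEdge_image, hs.project_injOn.ncard_image,
    ((killedEdge_injOn hs.config hs.config_insert_m hs.m_notMem).mono Set.sdiff_subset).ncard_image]
    at hL
  have hG := Set.ncard_sdiff_add_ncard_of_subset (s := liftedEdges E C a m)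
    (t := gainedEdges E C m) fun e he => he.1
  have := hs.ncard_liftedEdges_le (E := E)
  omega

theorem sub_ncard_repEdges_le (hs : ModulePair C a m) :
    ((RepEdges E (insert a C)).ncard : ℤ) - (RepEdges E (insert m (insert a C))).ncard ≤
      (RepEdges E C).ncard - (RepEdges E (insert m C)).ncard := by
  rw [ncard_repEdges_sub_ncard_repEdges_insert, ncard_repEdges_sub_ncard_repEdges_insert]
  have := hs.ncard_lostEdges_add_ncard_gainedEdges_le (E := E)
  omega

end ModulePair

variable {E : Set (V × V)} {C : Finset (Finset V)} {a m : Finset V}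

theorem sub_ncard_repEdges_insert_le (hC : IsConfig C) (hCam : IsConfig (insert m (insert a C))) :
    ((RepEdges E (insert a C)).ncard : ℤ) - (RepEdges E (insert m (insert a C))).ncard ≤
      (RepEdges E C).ncard - (RepEdges E (insert m C)).ncard := by
  by_cases ha : a ∈ C
  · rw [insert_eq_of_mem ha]
  by_cases hm : m ∈ C
  · rw [insert_eq_of_mem hm, insert_eq_of_mem (mem_insert_of_mem hm)]
    simp
  by_cases ham : a = m
  · subst ham
    rw [insert_idem] at hCam ⊢
    have := ncard_repEdges_insert_le (E := E) hC hCam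
    omega
  rcases hCam.2.2 a (mem_insert_of_mem (mem_insert_self a C)) m (mem_insert_self m _) with
    h | h | h
  · exact (ModulePair.mk hC hCam ha hm ham (.inr h)).sub_ncard_repEdges_le
  · have hs : ModulePair C m a := ⟨hC, insert_comm a m C ▸ hCam, hm, ha, Ne.symm ham, .inr h⟩
    have := hs.sub_ncard_repEdges_le (E := E)
    rw [insert_comm] at this
    omega
  · exact (ModulePair.mk hC hCam ha hm ham (.inl h)).sub_ncard_repEdges_le

theorem sub_ncard_repEdges_insert_union_le (hC : IsConfig C) (D : Finset (Finset V))
    (hCDm : IsConfig (insert m (C ∪ D))) :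
    ((RepEdges E (C ∪ D)).ncard : ℤ) - (RepEdges E (insert m (C ∪ D))).ncard ≤
      (RepEdges E C).ncard - (RepEdges E (insert m C)).ncard := by
  induction D using Finset.induction_on with
  | empty => simp
  | insert a D _ ih =>
    rw [union_insert] at hCDm ⊢
    have hsing : ∀ v, {v} ∈ C ∪ D := fun v => mem_union_left D (hC.2.1 v)
    exact (sub_ncard_repEdges_insert_le (hCDm.of_subset
      ((subset_insert a _).trans (subset_insert m _)) hsing) hCDm).trans
      (ih (hCDm.of_subset (insert_subset_insert m (subset_insert a _))
        fun v => mem_insert_of_mem (hsing v)))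

end Step

theorem statement10_general {V : Type*} [Fintype V] [DecidableEq V] (E : Set (V × V))
    (C C' : Finset (Finset V)) (hC : IsConfig C) (hCC' : C ⊆ C')
    (m : Finset V)
    (h2 : IsConfig (insert m C')) :
    ((RepEdges E C).ncard : ℤ) - (RepEdges E (insert m C)).ncard ≥
      ((RepEdges E C').ncard : ℤ) - (RepEdges E (insert m C')).ncard := by
  have h := sub_ncard_repEdges_insert_union_le (E := E) hC (C' \ C)
    (by rwa [union_sdiff_of_subset hCC'])
  rwa [union_sdiff_of_subset hCC'] at h

/-- Diminishing returns for module addition: let `C ⊆ C′` be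
configurations over `(V, E)` and let `m ⊆ V` be a nonempty set such that both
`C ∪ {m}` and `C′ ∪ {m}` are configurations.  Then
`|R(C)| − |R(C ∪ {m})| ≥ |R(C′)| − |R(C′ ∪ {m})|`: if adding `m` to `C` removes
`e` representative edges, adding `m` to the larger configuration `C′` removes
at most `e` representative edges. -/
theorem statement10 {V : Type*} [Fintype V] [DecidableEq V] (E : Set (V × V))
    (C C' : Finset (Finset V)) (hC : IsConfig C) (hC' : IsConfig C') (hCC' : C ⊆ C')
    (m : Finset V) (hm : m.Nonempty)
    (h1 : IsConfig (insert m C)) (h2 : IsConfig (insert m C')) :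
    ((RepEdges E C).ncard : ℤ) - (RepEdges E (insert m C)).ncard ≥
      ((RepEdges E C').ncard : ℤ) - (RepEdges E (insert m C')).ncard :=
  statement10_general E C C' hC hCC' m h2
end

section
/- An optimal configuration has at most n − 2 nontrivial modules: suppose |V| = n ≥ 2 and E contains no self-loops, i.e. (v, v) ∉ E for every v ∈ V. Then every optimal configuration over (V, E) contains at most n − 2 nontrivial modules. -/
/-!
Without self-loops a possible edge `(m, n)` has disjoint nonempty sides, so `V` itself carries no
possible edge; deleting it from an optimal configuration would leave `R` unchanged, against
minimality. The nontrivial modules therefore form a laminar family of proper subsets of `V` of size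
at least two, and such a family has at most `|V| - 2` members: contracting a minimal member loses
one member and one point.
-/

open Finset

theorem Finset.injOn_erase_of_mem_iff {α : Type*} [DecidableEq α] {s : Set (Finset α)}
    {x y : α} (hxy : x ≠ y) (h : ∀ p ∈ s, y ∈ p ↔ x ∈ p) : Set.InjOn (·.erase y) s := by
  intro p hp q hq (hpq : p.erase y = q.erase y)
  have hyx : y ∈ p ↔ y ∈ q := by
    rw [h p hp, h q hq]
    simpa [hxy] using congrArg (x ∈ ·) hpq
  by_cases hyp : y ∈ p
  · exact erase_injOn' y hyp (hyx.1 hyp) hpq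
  · rwa [erase_eq_of_notMem hyp, erase_eq_of_notMem (hyx.not.1 hyp)] at hpq

def IsLaminar {α : Type*} (L : Finset (Finset α)) : Prop :=
  ∀ m ∈ L, ∀ n ∈ L, m ⊆ n ∨ n ⊆ m ∨ Disjoint m n

namespace IsLaminar

variable {α : Type*} {L : Finset (Finset α)}

theorem mono {L' : Finset (Finset α)} (hL : IsLaminar L) (h : L' ⊆ L) : IsLaminar L' :=
  fun m hm n hn => hL m (h hm) n (h hn)

theorem ssubset_or_disjoint_of_card_le {m p : Finset α} (hL : IsLaminar L) (hm : m ∈ L)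
    (hmin : ∀ q ∈ L, m.card ≤ q.card) (hp : p ∈ L) (hpm : p ≠ m) : m ⊂ p ∨ Disjoint m p := by
  rcases hL m hm p hp with h | h | h
  · exact .inl (h.ssubset_of_ne hpm.symm)
  · exact absurd (eq_of_subset_of_card_le h (hmin p hp)) hpm
  · exact .inr h

variable [DecidableEq α]

theorem image_erase (hL : IsLaminar L) (y : α) : IsLaminar (L.image (·.erase y)) := by
  simp only [IsLaminar, mem_image]
  rintro _ ⟨m, hm, rfl⟩ _ ⟨n, hn, rfl⟩
  rcases hL m hm n hn with h | h | h
  · exact .inl (erase_subset_erase y h)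
  · exact .inr (.inl (erase_subset_erase y h))
  · exact .inr (.inr (h.mono (erase_subset y m) (erase_subset y n)))

/-- Contract a member `m` of minimal size, with `x ≠ y` in `m`, by deleting `y` from every set:
every other member either contains both `x` and `y` or neither, so `m` is the only member lost. -/
theorem exists_contraction {S : Finset α} (hL : IsLaminar L) (hsub : ∀ m ∈ L, m ⊆ S)
    (hcard : ∀ m ∈ L, 2 ≤ m.card) (hS : S ∉ L) (hne : L.Nonempty) :
    ∃ (L' : Finset (Finset α)) (S' : Finset α), IsLaminar L' ∧ (∀ m ∈ L', m ⊆ S') ∧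
      (∀ m ∈ L', 2 ≤ m.card) ∧ S' ∉ L' ∧
      L'.card + 1 = L.card ∧ S'.card + 1 = S.card := by
  obtain ⟨m, hm, hmin⟩ := L.exists_min_image card hne
  obtain ⟨x, hx, y, hy, hxy⟩ := one_lt_card.1 (hcard m hm)
  have hcases : ∀ p ∈ L.erase m, m ⊂ p ∨ Disjoint m p := fun p hp =>
    hL.ssubset_or_disjoint_of_card_le hm hmin (mem_of_mem_erase hp) (ne_of_mem_erase hp)
  have hyx : ∀ p ∈ L.erase m, y ∈ p ↔ x ∈ p := fun p hp => by
    rcases hcases p hp with h | h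
    · exact iff_of_true (h.subset hy) (h.subset hx)
    · exact iff_of_false (disjoint_left.1 h hy) (disjoint_left.1 h hx)
  have hyS : y ∈ S := hsub m hm hy
  refine ⟨(L.erase m).image (·.erase y), S.erase y, (hL.mono (erase_subset m L)).image_erase y,
    ?_, ?_, ?_, ?_, card_erase_add_one hyS⟩
  · simp only [mem_image]
    rintro _ ⟨p, hp, rfl⟩
    exact erase_subset_erase y (hsub p (mem_of_mem_erase hp))
  · simp only [mem_image]
    rintro _ ⟨p, hp, rfl⟩
    rcases hcases p hp with h | h
    · have := (hcard m hm).trans_lt (card_lt_card h)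
      rw [card_erase_of_mem (h.subset hy)]
      omega
    · rw [erase_eq_of_notMem (disjoint_left.1 h hy)]
      exact hcard p (mem_of_mem_erase hp)
  · simp only [mem_image, not_exists, not_and]
    intro p hp hpS
    have hxp : x ∈ p := mem_of_mem_erase (hpS ▸ mem_erase.2 ⟨hxy, hsub m hm hx⟩)
    refine hS ?_
    rw [← insert_erase hyS, ← hpS, insert_erase ((hyx p hp).2 hxp)]
    exact mem_of_mem_erase hp
  · rw [card_image_of_injOn (injOn_erase_of_mem_iff hxy hyx), card_erase_add_one hm]

theorem card_le_card_sub_two {S : Finset α} (hL : IsLaminar L) (hsub : ∀ m ∈ L, m ⊆ S)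
    (hcard : ∀ m ∈ L, 2 ≤ m.card) (hS : S ∉ L) : L.card ≤ S.card - 2 := by
  induction hk : L.card generalizing L S with
  | zero => exact Nat.zero_le _
  | succ k ih =>
    have hne : L.Nonempty := card_pos.1 (by omega)
    obtain ⟨m, hm⟩ := hne
    have hS3 : 2 < S.card :=
      (hcard m hm).trans_lt (card_lt_card ((hsub m hm).ssubset_of_ne (ne_of_mem_of_not_mem hm hS)))
    obtain ⟨L', S', hL', hsub', hcard', hS', hLL', hSS'⟩ :=
      hL.exists_contraction hsub hcard hS ⟨m, hm⟩
    have := ih hL' hsub' hcard' hS' (by omega)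
    omega

end IsLaminar

section Edges

variable {V : Type*} [DecidableEq V] {E : Set (V × V)} {M : Finset (Finset V)}

theorem PossEdge.disjoint (hloop : ∀ v : V, (v, v) ∉ E) (hne : ∀ m ∈ M, m.Nonempty)
    {p : Finset V × Finset V} (hp : PossEdge E M p) : Disjoint p.1 p.2 := by
  obtain ⟨h1, -, hE, heq | hdisj⟩ := hp
  · obtain ⟨u, hu⟩ := hne _ h1
    exact absurd (hE u hu u (heq ▸ hu)) (hloop u)
  · exact disjoint_iff_inter_eq_empty.2 hdisj

theorem PossEdge.ne_univ [Fintype V] (hloop : ∀ v : V, (v, v) ∉ E) (hne : ∀ m ∈ M, m.Nonempty)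
    {p : Finset V × Finset V} (hp : PossEdge E M p) : p.1 ≠ univ ∧ p.2 ≠ univ := by
  have hdisj := hp.disjoint hloop hne
  constructor
  · rintro h
    obtain ⟨u, hu⟩ := hne _ hp.2.1
    exact disjoint_left.1 hdisj (h ▸ mem_univ u) hu
  · rintro h
    obtain ⟨u, hu⟩ := hne _ hp.1
    exact disjoint_left.1 hdisj hu (h ▸ mem_univ u)

theorem possEdge_erase_iff {s : Finset V} (hs : ∀ p, PossEdge E M p → p.1 ≠ s ∧ p.2 ≠ s)
    {p : Finset V × Finset V} : PossEdge E (M.erase s) p ↔ PossEdge E M p := by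
  refine ⟨fun ⟨h1, h2, hE, h⟩ => ⟨mem_of_mem_erase h1, mem_of_mem_erase h2, hE, h⟩, fun hp => ?_⟩
  exact ⟨mem_erase.2 ⟨(hs p hp).1, hp.1⟩, mem_erase.2 ⟨(hs p hp).2, hp.2.1⟩, hp.2.2⟩

theorem repEdges_erase {s : Finset V} (hs : ∀ p, PossEdge E M p → p.1 ≠ s ∧ p.2 ≠ s) :
    RepEdges E (M.erase s) = RepEdges E M := by
  simp only [RepEdges, Dominated, possEdge_erase_iff hs]

section Config

variable [Fintype V]

theorem IsConfig.isLaminar (hM : IsConfig M) : IsLaminar M := fun m hm n hn => by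
  simpa only [disjoint_iff_inter_eq_empty] using hM.2.2 m hm n hn

theorem IsConfig.erase (hM : IsConfig M) {s : Finset V} (hs : 1 < s.card) :
    IsConfig (M.erase s) := by
  refine ⟨fun m hm => hM.1 m (mem_of_mem_erase hm), fun v => mem_erase.2 ⟨?_, hM.2.1 v⟩,
    fun m hm n hn => hM.2.2 m (mem_of_mem_erase hm) n (mem_of_mem_erase hn)⟩
  rintro rfl
  simp at hs

theorem IsOptimal.exists_possEdge_of_mem {C : Finset (Finset V)} (hC : IsOptimal E C)
    {s : Finset V} (hs : s ∈ C) (hs2 : 1 < s.card) :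
    ∃ p, PossEdge E C p ∧ (p.1 = s ∨ p.2 = s) := by
  by_contra! h
  exact hC.2.2 (C.erase s) (erase_subset s C) (by simpa [erase_eq_self] using hs)
    (hC.1.erase hs2) (by rw [repEdges_erase fun p hp => h p hp])

theorem IsOptimal.univ_notMem {C : Finset (Finset V)} (hloop : ∀ v : V, (v, v) ∉ E)
    (hC : IsOptimal E C) (hV : 1 < Fintype.card V) : univ ∉ C := by
  intro hu
  obtain ⟨p, hp, h⟩ := hC.exists_possEdge_of_mem hu (by rwa [card_univ])
  have := hp.ne_univ hloop hC.1.1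
  tauto

end Config

end Edges

theorem statement14_general {V : Type*} [Fintype V] [DecidableEq V] (E : Set (V × V))
    (n : ℕ) (hV : Fintype.card V = n)
    (hloop : ∀ v : V, (v, v) ∉ E)
    (C : Finset (Finset V)) (hC : IsOptimal E C) :
    (C.filter fun m => 2 ≤ m.card).card ≤ n - 2 := by
  have huniv : univ ∉ C.filter fun m => 2 ≤ m.card := by
    rw [mem_filter, card_univ]
    exact fun ⟨hu, h2⟩ => hC.univ_notMem hloop h2 hu
  have hbound := (hC.1.isLaminar.mono (filter_subset _ C)).card_le_card_sub_two
    (fun m _ => subset_univ m) (fun m hm => (mem_filter.1 hm).2) huniv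
  rwa [card_univ, hV] at hbound

/-- An optimal configuration has at most `n − 2` nontrivial
modules: suppose `|V| = n ≥ 2` and `E` contains no self-loops.  Then every
optimal configuration over `(V, E)` contains at most `n − 2` nontrivial
modules (members of size at least 2). -/
theorem statement14 {V : Type*} [Fintype V] [DecidableEq V] (E : Set (V × V))
    (n : ℕ) (hn : 2 ≤ n) (hV : Fintype.card V = n)
    (hloop : ∀ v : V, (v, v) ∉ E)
    (C : Finset (Finset V)) (hC : IsOptimal E C) :
    (C.filter fun m => 2 ≤ m.card).card ≤ n - 2 :=
  statement14_general E n hV hloop C hC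
end
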